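/- Let M be a symmetric positive semidefinite operator on a finite-dimensional Hilbert space with distinct eigenvalues μ₁ > μ₂ > ⋯ ≥ 0 and spectral projectors P_r, where the top eigenvalue μ₁ is simple with unit eigenvector u₁ and spectral gap ḡ₁ = μ₁ − μ₂ > 0. Let M̂ be another symmetric operator with leading unit eigenvector û₁ (sign chosen so ⟨û₁, u₁⟩ ≥ 0), let P₁ = u₁⊗u₁, P̂₁ = û₁⊗û₁, C₁ = ∑_{s≠1} (μ₁ − μ_s)⁻¹ P_s, and L₁ = C₁(M̂ − M)P₁ + P₁(M̂ − M)C₁. Then the remainder S₁ := P̂₁ − P₁ − L₁ satisfies ‖S₁‖ ≤ 14 (‖M̂ − M‖ / ḡ₁)². -/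

import Mathlib

open scoped RealInnerProductSpace BigOperators

/-!
Write `û = c u + v` with `c = ⟪u, û⟫` and `v ⟂ u`. Applying the spectral projectors `P i`,
`i ≠ i₀`, to the eigen-equation `M̂ û = μ̂ û` gives `v = R(μ̂) (M̂ - M) û`, where
`R(t) = ∑_{i ≠ i₀} (t - μ i)⁻¹ P i` is the reduced resolvent. By Weyl's inequality
`|μ̂ - μ i₀| ≤ ε := ‖M̂ - M‖`, so `‖R(μ̂)‖ ≤ (ḡ - ε)⁻¹` and `‖v‖ ≤ ε / (ḡ - ε)`.
Since `1 - c² = ‖v‖²`, the remainder splits as `S = (v ⊗ v - ‖v‖² u ⊗ u) + (z ⊗ u + u ⊗ z)` with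
`z = c v - C₁ (M̂ - M) u = R(μ̂) (M̂ - M) (c û - u) + (R(μ̂) - C₁) (M̂ - M) u`, and `C₁ = R(μ i₀)`.
Both pieces are of second order in `ε / ḡ`.
-/

/-- The rank-one operator `x ↦ ⟨v, x⟩ u`. -/
noncomputable def rankOneOp {E : Type*} [NormedAddCommGroup E] [InnerProductSpace ℝ E]
    (u v : E) : E →L[ℝ] E :=
  (innerSL ℝ v).smulRight u

lemma ContinuousLinearMap.opNorm_le_of_norm_apply_sq_le {𝕜 E F : Type*}
    [NontriviallyNormedField 𝕜] [SeminormedAddCommGroup E] [SeminormedAddCommGroup F]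
    [NormedSpace 𝕜 E] [NormedSpace 𝕜 F] (T : E →L[𝕜] F) {b : ℝ} (hb : 0 ≤ b)
    (h : ∀ x, ‖T x‖ ^ 2 ≤ (b * ‖x‖) ^ 2) : ‖T‖ ≤ b :=
  T.opNorm_le_bound hb fun x => (sq_le_sq₀ (norm_nonneg _) (by positivity)).1 (h x)

lemma ContinuousLinearMap.norm_apply_apply_le {𝕜 E F G : Type*} [NontriviallyNormedField 𝕜]
    [SeminormedAddCommGroup E] [SeminormedAddCommGroup F] [SeminormedAddCommGroup G]
    [NormedSpace 𝕜 E] [NormedSpace 𝕜 F] [NormedSpace 𝕜 G] (T : F →L[𝕜] G) (S : E →L[𝕜] F)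
    (x : E) : ‖T (S x)‖ ≤ ‖T‖ * ‖S‖ * ‖x‖ :=
  ((T.comp S).le_opNorm x).trans (mul_le_mul_of_nonneg_right (T.opNorm_comp_le S) (norm_nonneg x))

section InnerProductSpace

variable {E : Type*} [NormedAddCommGroup E] [InnerProductSpace ℝ E]

lemma abs_inner_apply_self_sub_le {A B : E →L[ℝ] E} {x y : E} (hx : ‖x‖ = 1) (hy : ‖y‖ = 1)
    (hA : ∀ z, ‖z‖ = 1 → ⟪A z, z⟫ ≤ ⟪A x, x⟫) (hB : ∀ z, ‖z‖ = 1 → ⟪B z, z⟫ ≤ ⟪B y, y⟫) :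
    |⟪A x, x⟫ - ⟪B y, y⟫| ≤ ‖A - B‖ := by
  have hdiff : ∀ z, ‖z‖ = 1 → |⟪A z, z⟫ - ⟪B z, z⟫| ≤ ‖A - B‖ := fun z hz => by
    rw [← inner_sub_left, ← sub_apply]
    simpa [hz] using (abs_real_inner_le_norm _ _).trans
      (mul_le_mul_of_nonneg_right ((A - B).le_opNorm z) (norm_nonneg z))
  have h₁ := abs_le.1 (hdiff x hx)
  have h₂ := abs_le.1 (hdiff y hy)
  exact abs_sub_le_iff.2 ⟨by linarith [hB x hx], by linarith [hA y hy]⟩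

lemma norm_smul_add_smul_sq {u v : E} (hu : ‖u‖ = 1) (hvu : ⟪v, u⟫ = 0) (a b : ℝ) :
    ‖a • v + b • u‖ ^ 2 = a ^ 2 * ‖v‖ ^ 2 + b ^ 2 := by
  have h := norm_add_sq_eq_norm_sq_add_norm_sq_real
    (show ⟪a • v, b • u⟫ = 0 by simp [real_inner_smul_left, real_inner_smul_right, hvu])
  simp only [norm_smul, Real.norm_eq_abs, hu] at h
  nlinarith [sq_abs a, sq_abs b]

/-- Bessel's inequality for the orthonormal pair `u`, `v / ‖v‖`, cleared of denominators. -/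
lemma inner_sq_add_norm_sq_mul_inner_sq_le {u v : E} (hu : ‖u‖ = 1) (hvu : ⟪v, u⟫ = 0) (x : E) :
    ⟪v, x⟫ ^ 2 + ‖v‖ ^ 2 * ⟪u, x⟫ ^ 2 ≤ ‖v‖ ^ 2 * ‖x‖ ^ 2 := by
  have hproj : ⟪v, x - ⟪u, x⟫ • u⟫ = ⟪v, x⟫ := by
    simp [inner_sub_right, real_inner_smul_right, hvu]
  have hnorm : ⟪x - ⟪u, x⟫ • u, x - ⟪u, x⟫ • u⟫ = ‖x‖ ^ 2 - ⟪u, x⟫ ^ 2 := by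
    simp only [inner_sub_left, inner_sub_right, real_inner_smul_left, real_inner_smul_right,
      real_inner_self_eq_norm_sq, norm_smul, Real.norm_eq_abs, mul_pow, sq_abs, hu,
      real_inner_comm u x]
    ring
  have hcs := real_inner_mul_inner_self_le v (x - ⟪u, x⟫ • u)
  rw [hproj, hnorm, real_inner_self_eq_norm_sq] at hcs
  nlinarith

lemma norm_inner_smul_sub_eq {u û : E} (h : ‖u‖ = ‖û‖) :
    ‖⟪u, û⟫ • û - u‖ = ‖û - ⟪u, û⟫ • u‖ := by
  refine (sq_eq_sq₀ (norm_nonneg _) (norm_nonneg _)).1 ?_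
  simp only [← real_inner_self_eq_norm_sq, inner_sub_left, inner_sub_right, real_inner_smul_left,
    real_inner_smul_right, real_inner_comm u û]
  simp only [real_inner_self_eq_norm_sq, h]
  ring

@[simp]
lemma rankOneOp_apply (u v x : E) : rankOneOp u v x = ⟪v, x⟫ • u := rfl

lemma rankOneOp_self_apply_self {u : E} (hu : ‖u‖ = 1) : rankOneOp u u u = u := by
  simp [hu]

lemma comp_rankOneOp (T : E →L[ℝ] E) (u v : E) :
    T.comp (rankOneOp u v) = rankOneOp (T u) v := by
  ext x
  simp

lemma rankOneOp_comp {T : E →L[ℝ] E} (hT : ∀ x y, ⟪T x, y⟫ = ⟪x, T y⟫) (u v : E) :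
    (rankOneOp u v).comp T = rankOneOp u (T v) := by
  ext x
  simp [hT v x]

lemma comp_comp_rankOneOp_add_rankOneOp_comp_comp {S T : E →L[ℝ] E}
    (hS : ∀ x y, ⟪S x, y⟫ = ⟪x, S y⟫) (hT : ∀ x y, ⟪T x, y⟫ = ⟪x, T y⟫) (u : E) :
    S.comp (T.comp (rankOneOp u u)) + (rankOneOp u u).comp (T.comp S) =
      rankOneOp (S (T u)) u + rankOneOp u (S (T u)) := by
  rw [comp_rankOneOp, comp_rankOneOp, ← ContinuousLinearMap.comp_assoc, rankOneOp_comp hT,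
    rankOneOp_comp hS]

lemma norm_rankOneOp_sub_le {u v : E} (hu : ‖u‖ = 1) (hvu : ⟪v, u⟫ = 0) :
    ‖rankOneOp v v - ‖v‖ ^ 2 • rankOneOp u u‖ ≤ ‖v‖ ^ 2 := by
  refine ContinuousLinearMap.opNorm_le_of_norm_apply_sq_le _ (by positivity) fun x => ?_
  have h := norm_smul_add_smul_sq hu hvu ⟪v, x⟫ (-(‖v‖ ^ 2 * ⟪u, x⟫))
  simp only [neg_smul, ← sub_eq_add_neg, ← smul_smul] at h
  simp only [sub_apply, smul_apply, rankOneOp_apply, h]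
  nlinarith [sq_nonneg ‖v‖, inner_sq_add_norm_sq_mul_inner_sq_le hu hvu x]

lemma norm_rankOneOp_add_le {u v : E} (hu : ‖u‖ = 1) (hvu : ⟪v, u⟫ = 0) :
    ‖rankOneOp v u + rankOneOp u v‖ ≤ ‖v‖ := by
  refine ContinuousLinearMap.opNorm_le_of_norm_apply_sq_le _ (norm_nonneg _) fun x => ?_
  simp only [add_apply, rankOneOp_apply, norm_smul_add_smul_sq hu hvu]
  nlinarith [inner_sq_add_norm_sq_mul_inner_sq_le hu hvu x]

lemma norm_rankOneOp_sub_rankOneOp_sub_le {u û w : E} (hu : ‖u‖ = 1) (hû : ‖û‖ = 1)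
    (hwu : ⟪w, u⟫ = 0) :
    ‖rankOneOp û û - rankOneOp u u - (rankOneOp w u + rankOneOp u w)‖ ≤
      ‖û - ⟪u, û⟫ • u‖ ^ 2 + ‖⟪u, û⟫ • (û - ⟪u, û⟫ • u) - w‖ := by
  set c := ⟪u, û⟫
  set v := û - c • u
  have hvu : ⟪v, u⟫ = 0 := by
    simp only [v, c, inner_sub_left, real_inner_smul_left, real_inner_self_eq_norm_sq, hu,
      real_inner_comm u û]
    ring
  have hzu : ⟪c • v - w, u⟫ = 0 := by
    simp [inner_sub_left, real_inner_smul_left, hvu, hwu]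
  have hvnorm : ‖v‖ ^ 2 = 1 - c ^ 2 := by
    rw [← real_inner_self_eq_norm_sq]
    simp only [v, inner_sub_left, inner_sub_right, real_inner_smul_left, real_inner_smul_right,
      real_inner_self_eq_norm_sq, norm_smul, Real.norm_eq_abs, mul_pow, sq_abs, hu, hû, c,
      real_inner_comm u û]
    ring
  have hdecomp : rankOneOp û û - rankOneOp u u - (rankOneOp w u + rankOneOp u w) =
      (rankOneOp v v - ‖v‖ ^ 2 • rankOneOp u u) +
        (rankOneOp (c • v - w) u + rankOneOp u (c • v - w)) := by
    rw [hvnorm]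
    ext x
    simp only [sub_apply, add_apply, smul_apply, rankOneOp_apply, v, inner_sub_left,
      real_inner_smul_left]
    module
  rw [hdecomp]
  exact (norm_add_le _ _).trans
    (add_le_add (norm_rankOneOp_sub_le hu hvu) (norm_rankOneOp_add_le hu hzu))

lemma norm_rankOneOp_sub_rankOneOp_sub_le_two_mul_sq_add {u û : E} (hu : ‖u‖ = 1) (hû : ‖û‖ = 1)
    {Δ R C : E →L[ℝ] E} (hv : û - ⟪u, û⟫ • u = R (Δ û)) (hCu : ⟪C (Δ u), u⟫ = 0) {a b : ℝ}
    (ha : ‖R‖ * ‖Δ‖ ≤ a) (hb : ‖R - C‖ * ‖Δ‖ ≤ b) :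
    ‖rankOneOp û û - rankOneOp u u - (rankOneOp (C (Δ u)) u + rankOneOp u (C (Δ u)))‖ ≤
      2 * a ^ 2 + b := by
  set c := ⟪u, û⟫
  have ha₀ : 0 ≤ a := (by positivity : 0 ≤ ‖R‖ * ‖Δ‖).trans ha
  have hvle : ‖û - c • u‖ ≤ a :=
    calc ‖û - c • u‖ ≤ ‖R‖ * ‖Δ‖ * ‖û‖ := hv ▸ R.norm_apply_apply_le Δ û
      _ ≤ a := by rwa [hû, mul_one]
  have hz : c • (û - c • u) - C (Δ u) = R (Δ (c • û - u)) + (R - C) (Δ u) := by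
    rw [hv, map_sub, map_smul, map_sub, map_smul, sub_apply R]
    abel
  have hzle : ‖c • (û - c • u) - C (Δ u)‖ ≤ a ^ 2 + b := by
    rw [hz, sq]
    refine (norm_add_le _ _).trans (add_le_add ?_ ?_)
    · calc ‖R (Δ (c • û - u))‖ ≤ ‖R‖ * ‖Δ‖ * ‖c • û - u‖ := R.norm_apply_apply_le Δ _
        _ ≤ a * a := by
          rw [norm_inner_smul_sub_eq (hu.trans hû.symm)]
          gcongr
    · calc ‖(R - C) (Δ u)‖ ≤ ‖R - C‖ * ‖Δ‖ * ‖u‖ := (R - C).norm_apply_apply_le Δ u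
        _ ≤ b := by rwa [hu, mul_one]
  have hvsq : ‖û - c • u‖ ^ 2 ≤ a ^ 2 := pow_le_pow_left₀ (norm_nonneg _) hvle 2
  linarith [norm_rankOneOp_sub_rankOneOp_sub_le hu hû hCu]

end InnerProductSpace

/-- The spectral projectors `P_r` of a symmetric operator. -/
structure IsResolutionOfIdentity {E ι : Type*} [NormedAddCommGroup E] [InnerProductSpace ℝ E]
    [Fintype ι] (P : ι → E →L[ℝ] E) : Prop where
  isSymmetric : ∀ i x y, ⟪P i x, y⟫ = ⟪x, P i y⟫
  comp_self : ∀ i, (P i).comp (P i) = P i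
  comp_of_ne : ∀ i j, i ≠ j → (P i).comp (P j) = 0
  sum_eq_id : ∑ i, P i = ContinuousLinearMap.id ℝ E

/-- At `t = μ i₀` this is the operator `C₁` of the first-order term. -/
noncomputable def reducedResolvent {E ι : Type*} [NormedAddCommGroup E] [InnerProductSpace ℝ E]
    [Fintype ι] [DecidableEq ι] (P : ι → E →L[ℝ] E) (μ : ι → ℝ) (i₀ : ι) (t : ℝ) : E →L[ℝ] E :=
  ∑ i ∈ Finset.univ.erase i₀, (t - μ i)⁻¹ • P i

namespace IsResolutionOfIdentity

variable {E ι : Type*} [NormedAddCommGroup E] [InnerProductSpace ℝ E] [Fintype ι]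
  {P : ι → E →L[ℝ] E}

lemma apply_apply [DecidableEq ι] (hP : IsResolutionOfIdentity P) (i j : ι) (x : E) :
    P i (P j x) = if i = j then P i x else 0 := by
  split_ifs with h
  · subst h
    exact congrArg (· x) (hP.comp_self i)
  · exact congrArg (· x) (hP.comp_of_ne i j h)

lemma sum_apply (hP : IsResolutionOfIdentity P) (x : E) : ∑ i, P i x = x := by
  simpa using congrArg (· x) hP.sum_eq_id

lemma apply_sum_smul_apply [DecidableEq ι] (hP : IsResolutionOfIdentity P) (s : Finset ι)
    (α : ι → ℝ) (j : ι) (x : E) :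
    P j (∑ i ∈ s, α i • P i x) = if j ∈ s then α j • P j x else 0 := by
  simp [map_sum, hP.apply_apply, Finset.sum_ite_eq]

lemma isSymmetric_sum_smul (hP : IsResolutionOfIdentity P) (s : Finset ι) (α : ι → ℝ)
    (x y : E) : ⟪(∑ i ∈ s, α i • P i) x, y⟫ = ⟪x, (∑ i ∈ s, α i • P i) y⟫ := by
  simp [sum_inner, inner_sum, real_inner_smul_left, real_inner_smul_right, hP.isSymmetric _ x y]

lemma inner_apply_self (hP : IsResolutionOfIdentity P) (i : ι) (x : E) :
    ⟪P i x, x⟫ = ‖P i x‖ ^ 2 := by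
  classical
  rw [← real_inner_self_eq_norm_sq, hP.isSymmetric i x (P i x), hP.apply_apply, if_pos rfl,
    real_inner_comm]

lemma inner_sum_smul_apply_self (hP : IsResolutionOfIdentity P) (s : Finset ι) (α : ι → ℝ)
    (x : E) : ⟪(∑ i ∈ s, α i • P i) x, x⟫ = ∑ i ∈ s, α i * ‖P i x‖ ^ 2 := by
  simp [sum_inner, real_inner_smul_left, hP.inner_apply_self]

lemma sum_norm_sq_apply (hP : IsResolutionOfIdentity P) (x : E) :
    ∑ i, ‖P i x‖ ^ 2 = ‖x‖ ^ 2 := by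
  simpa [hP.sum_eq_id] using (hP.inner_sum_smul_apply_self Finset.univ 1 x).symm

lemma inner_sum_smul_apply_self_le (hP : IsResolutionOfIdentity P) {μ : ι → ℝ} {b : ℝ}
    (hμ : ∀ i, μ i ≤ b) (x : E) : ⟪(∑ i, μ i • P i) x, x⟫ ≤ b * ‖x‖ ^ 2 := by
  rw [hP.inner_sum_smul_apply_self, ← hP.sum_norm_sq_apply, Finset.mul_sum]
  exact Finset.sum_le_sum fun i _ => mul_le_mul_of_nonneg_right (hμ i) (sq_nonneg _)

lemma norm_sum_smul_apply_sq [DecidableEq ι] (hP : IsResolutionOfIdentity P) (s : Finset ι)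
    (α : ι → ℝ) (x : E) :
    ‖(∑ i ∈ s, α i • P i) x‖ ^ 2 = ∑ i ∈ s, α i ^ 2 * ‖P i x‖ ^ 2 := by
  have happ : ∀ (β : ι → ℝ) (y : E), (∑ i ∈ s, β i • P i) y = ∑ i ∈ s, β i • P i y := by simp
  have hsq : (∑ i ∈ s, α i • P i) ((∑ i ∈ s, α i • P i) x) = (∑ i ∈ s, α i ^ 2 • P i) x := by
    simp only [happ]
    refine Finset.sum_congr rfl fun i hi => ?_
    rw [hP.apply_sum_smul_apply, if_pos hi, smul_smul, sq]
  rw [← real_inner_self_eq_norm_sq, ← hP.isSymmetric_sum_smul, hsq, hP.inner_sum_smul_apply_self]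

lemma norm_sum_smul_le [DecidableEq ι] (hP : IsResolutionOfIdentity P) (s : Finset ι)
    {α : ι → ℝ} {b : ℝ} (hb : 0 ≤ b) (hα : ∀ i ∈ s, |α i| ≤ b) :
    ‖∑ i ∈ s, α i • P i‖ ≤ b := by
  refine ContinuousLinearMap.opNorm_le_of_norm_apply_sq_le _ hb fun x => ?_
  calc ‖(∑ i ∈ s, α i • P i) x‖ ^ 2 = ∑ i ∈ s, α i ^ 2 * ‖P i x‖ ^ 2 :=
        hP.norm_sum_smul_apply_sq s α x
    _ ≤ ∑ i ∈ s, b ^ 2 * ‖P i x‖ ^ 2 := Finset.sum_le_sum fun i hi =>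
        mul_le_mul_of_nonneg_right (sq_le_sq' (abs_le.1 (hα i hi)).1 (abs_le.1 (hα i hi)).2)
          (sq_nonneg _)
    _ ≤ ∑ i, b ^ 2 * ‖P i x‖ ^ 2 :=
        Finset.sum_le_sum_of_subset_of_nonneg (Finset.subset_univ s) fun _ _ _ => by positivity
    _ = (b * ‖x‖) ^ 2 := by rw [← Finset.mul_sum, hP.sum_norm_sq_apply, mul_pow]

variable [DecidableEq ι] {i₀ : ι} {u : E}

lemma apply_eq_zero_of_ne (hP : IsResolutionOfIdentity P) (hu : ‖u‖ = 1)
    (hPi₀ : P i₀ = rankOneOp u u) {i : ι} (hi : i ≠ i₀) : P i u = 0 := by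
  rw [← rankOneOp_self_apply_self hu, ← hPi₀, hP.apply_apply, if_neg hi]

lemma sum_smul_apply_eq_smul (hP : IsResolutionOfIdentity P) (hu : ‖u‖ = 1)
    (hPi₀ : P i₀ = rankOneOp u u) (μ : ι → ℝ) : (∑ i, μ i • P i) u = μ i₀ • u := by
  rw [← rankOneOp_self_apply_self hu, ← hPi₀]
  simp [hP.apply_apply]

lemma sub_inner_smul_eq_sum_erase (hP : IsResolutionOfIdentity P)
    (hPi₀ : P i₀ = rankOneOp u u) (x : E) :
    x - ⟪u, x⟫ • u = ∑ i ∈ Finset.univ.erase i₀, P i x := by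
  rw [sub_eq_iff_eq_add']
  conv_lhs => rw [← hP.sum_apply x, ← Finset.add_sum_erase _ _ (Finset.mem_univ i₀)]
  rw [hPi₀, rankOneOp_apply]

lemma abs_sub_inner_apply_self_le (hP : IsResolutionOfIdentity P) (hu : ‖u‖ = 1)
    (hPi₀ : P i₀ = rankOneOp u u) {μ : ι → ℝ} (hμ : ∀ i, μ i ≤ μ i₀) {A : E →L[ℝ] E} {û : E}
    (hû : ‖û‖ = 1) (htop : ∀ x, ‖x‖ = 1 → ⟪A x, x⟫ ≤ ⟪A û, û⟫) :
    |μ i₀ - ⟪A û, û⟫| ≤ ‖A - ∑ i, μ i • P i‖ := by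
  have hMu : ⟪(∑ i, μ i • P i) u, u⟫ = μ i₀ := by
    rw [hP.sum_smul_apply_eq_smul hu hPi₀, real_inner_smul_left, real_inner_self_eq_norm_sq, hu,
      one_pow, mul_one]
  rw [norm_sub_rev, ← hMu]
  refine abs_inner_apply_self_sub_le hu hû (fun x hx => ?_) htop
  rw [hMu]
  simpa [hx] using hP.inner_sum_smul_apply_self_le hμ x

lemma reducedResolvent_apply_eq_zero (hP : IsResolutionOfIdentity P) (hu : ‖u‖ = 1)
    (hPi₀ : P i₀ = rankOneOp u u) (μ : ι → ℝ) (t : ℝ) : reducedResolvent P μ i₀ t u = 0 := by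
  refine (_root_.sum_apply ..).trans (Finset.sum_eq_zero fun i hi => ?_)
  rw [smul_apply, hP.apply_eq_zero_of_ne hu hPi₀ (Finset.ne_of_mem_erase hi), smul_zero]

lemma isSymmetric_reducedResolvent (hP : IsResolutionOfIdentity P) (μ : ι → ℝ) (t : ℝ)
    (x y : E) : ⟪reducedResolvent P μ i₀ t x, y⟫ = ⟪x, reducedResolvent P μ i₀ t y⟫ :=
  hP.isSymmetric_sum_smul _ _ x y

lemma norm_reducedResolvent_le (hP : IsResolutionOfIdentity P) {μ : ι → ℝ} {t d : ℝ}
    (hd : 0 < d) (h : ∀ i ≠ i₀, d ≤ t - μ i) : ‖reducedResolvent P μ i₀ t‖ ≤ d⁻¹ := by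
  refine hP.norm_sum_smul_le _ (inv_nonneg.2 hd.le) fun i hi => ?_
  have hi := h i (Finset.ne_of_mem_erase hi)
  rw [abs_of_pos (inv_pos.2 (hd.trans_le hi))]
  exact inv_anti₀ hd hi

lemma norm_reducedResolvent_sub_le (hP : IsResolutionOfIdentity P) {μ : ι → ℝ} {t t' d d' : ℝ}
    (hd : 0 < d) (hd' : 0 < d') (h : ∀ i ≠ i₀, d ≤ t - μ i) (h' : ∀ i ≠ i₀, d' ≤ t' - μ i) :
    ‖reducedResolvent P μ i₀ t - reducedResolvent P μ i₀ t'‖ ≤ |t' - t| / (d * d') := by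
  have hsub : reducedResolvent P μ i₀ t - reducedResolvent P μ i₀ t' =
      ∑ i ∈ Finset.univ.erase i₀, ((t - μ i)⁻¹ - (t' - μ i)⁻¹) • P i := by
    simp only [reducedResolvent, ← Finset.sum_sub_distrib, sub_smul]
  rw [hsub]
  refine hP.norm_sum_smul_le _ (by positivity) fun i hi => ?_
  have ha := hd.trans_le (h i (Finset.ne_of_mem_erase hi))
  have hb := hd'.trans_le (h' i (Finset.ne_of_mem_erase hi))
  rw [inv_sub_inv ha.ne' hb.ne', sub_sub_sub_cancel_right, abs_div, abs_of_pos (mul_pos ha hb)]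
  gcongr
  · exact h i (Finset.ne_of_mem_erase hi)
  · exact h' i (Finset.ne_of_mem_erase hi)

lemma sub_inner_smul_eq_reducedResolvent_apply (hP : IsResolutionOfIdentity P)
    (hPi₀ : P i₀ = rankOneOp u u) {μ : ι → ℝ} {A : E →L[ℝ] E} {x : E} {t : ℝ}
    (hx : A x = t • x) (ht : ∀ i ≠ i₀, t ≠ μ i) :
    x - ⟪u, x⟫ • u = reducedResolvent P μ i₀ t ((A - ∑ i, μ i • P i) x) := by
  rw [hP.sub_inner_smul_eq_sum_erase hPi₀, reducedResolvent, _root_.sum_apply]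
  refine Finset.sum_congr rfl fun i hi => ?_
  have hPAM : P i ((A - ∑ j, μ j • P j) x) = (t - μ i) • P i x := by
    rw [sub_apply, map_sub, hx, map_smul, _root_.sum_apply]
    simp [hP.apply_sum_smul_apply, sub_smul]
  rw [smul_apply, hPAM, smul_smul,
    inv_mul_cancel₀ (sub_ne_zero.2 (ht i (Finset.ne_of_mem_erase hi))), one_smul]

theorem norm_rankOneOp_sub_sub_le (hP : IsResolutionOfIdentity P) {μ : ι → ℝ} {g : ℝ}
    (hgap : ∀ i ≠ i₀, μ i + g ≤ μ i₀) {û : E} (hu : ‖u‖ = 1) (hû : ‖û‖ = 1)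
    (hPi₀ : P i₀ = rankOneOp u u) {M A C L : E →L[ℝ] E} (hM : M = ∑ i, μ i • P i)
    (hC : C = reducedResolvent P μ i₀ (μ i₀))
    (hL : L = C.comp ((A - M).comp (P i₀)) + (P i₀).comp ((A - M).comp C))
    (hA : ∀ x y, ⟪A x, y⟫ = ⟪x, A y⟫) (hAû : A û = ⟪A û, û⟫ • û)
    (htop : ∀ x, ‖x‖ = 1 → ⟪A x, x⟫ ≤ ⟪A û, û⟫) (hclose : ‖A - M‖ < g / 2) :
    ‖rankOneOp û û - P i₀ - L‖ ≤ 14 * (‖A - M‖ / g) ^ 2 := by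
  subst hM hC hL
  set Δ := A - ∑ i, μ i • P i
  set ε := ‖Δ‖
  set t := ⟪A û, û⟫
  have hε : 0 ≤ ε := norm_nonneg _
  have hg : 0 < g := by linarith
  have hgε : 0 < g - ε := by linarith
  have hμ : ∀ i, μ i ≤ μ i₀ := fun i =>
    (eq_or_ne i i₀).elim (fun h => h ▸ le_rfl) fun hi => by linarith [hgap i hi]
  have ht : |μ i₀ - t| ≤ ε := hP.abs_sub_inner_apply_self_le hu hPi₀ hμ hû htop
  have hgapt : ∀ i ≠ i₀, g - ε ≤ t - μ i := fun i hi => by linarith [(abs_le.1 ht).2, hgap i hi]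
  have hgap₀ : ∀ i ≠ i₀, g ≤ μ i₀ - μ i := fun i hi => by linarith [hgap i hi]
  have hΔ : ∀ x y, ⟪Δ x, y⟫ = ⟪x, Δ y⟫ := fun x y => by
    simp only [Δ, sub_apply, inner_sub_left, inner_sub_right, hA, hP.isSymmetric_sum_smul]
  have hv : û - ⟪u, û⟫ • u = reducedResolvent P μ i₀ t (Δ û) :=
    hP.sub_inner_smul_eq_reducedResolvent_apply hPi₀ hAû fun i hi =>
      (by linarith [hgapt i hi] : μ i < t).ne'
  have hCu : ⟪reducedResolvent P μ i₀ (μ i₀) (Δ u), u⟫ = 0 := by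
    rw [hP.isSymmetric_reducedResolvent, hP.reducedResolvent_apply_eq_zero hu hPi₀,
      inner_zero_right]
  rw [hPi₀,
    comp_comp_rankOneOp_add_rankOneOp_comp_comp (hP.isSymmetric_reducedResolvent μ _) hΔ]
  refine (norm_rankOneOp_sub_rankOneOp_sub_le_two_mul_sq_add hu hû hv hCu
    (a := ε / (g - ε)) (b := ε / (g - ε) * (ε / g)) ?_ ?_).trans ?_
  · calc _ ≤ (g - ε)⁻¹ * ε := by gcongr; exact hP.norm_reducedResolvent_le hgε hgapt
      _ = ε / (g - ε) := inv_mul_eq_div _ _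
  · calc _ ≤ |μ i₀ - t| / ((g - ε) * g) * ε := by
          gcongr; exact hP.norm_reducedResolvent_sub_le hgε hg hgapt hgap₀
      _ ≤ ε / ((g - ε) * g) * ε := by gcongr
      _ = ε / (g - ε) * (ε / g) := by field_simp
  · have ha : ε / (g - ε) ≤ 2 * (ε / g) :=
      calc ε / (g - ε) ≤ ε / (g / 2) := div_le_div_of_nonneg_left hε (half_pos hg) (by linarith)
        _ = 2 * (ε / g) := by field_simp
    nlinarith [div_nonneg hε hgε.le, div_nonneg hε hg.le]

end IsResolutionOfIdentity

/-- Koltchinskii–Lounici perturbation bound: the remainder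
`S₁ = P̂₁ − P₁ − L₁` in the first-order expansion of the leading spectral projector
satisfies `‖S₁‖ ≤ 14 (‖M̂ − M‖/ḡ₁)²`. -/
theorem stmt_7 {m N : ℕ} (hN : 2 ≤ N)
    (M Mhat : EuclideanSpace ℝ (Fin m) →L[ℝ] EuclideanSpace ℝ (Fin m))
    (μs : Fin N → ℝ) (hdec : StrictAnti μs)
    (P : Fin N → (EuclideanSpace ℝ (Fin m) →L[ℝ] EuclideanSpace ℝ (Fin m)))
    (hPsymm : ∀ i x y, ⟪P i x, y⟫ = ⟪x, P i y⟫)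
    (hPidem : ∀ i, (P i).comp (P i) = P i)
    (hPorth : ∀ i j, i ≠ j → (P i).comp (P j) = 0)
    (hPsum : ∑ i, P i = ContinuousLinearMap.id ℝ (EuclideanSpace ℝ (Fin m)))
    (hM : M = ∑ i, μs i • P i)
    (u1 uhat1 : EuclideanSpace ℝ (Fin m))
    (hu1 : ‖u1‖ = 1) (huhat1 : ‖uhat1‖ = 1)
    (hP0 : P ⟨0, by omega⟩ = rankOneOp u1 u1)
    (hMhatsymm : ∀ x y, ⟪Mhat x, y⟫ = ⟪x, Mhat y⟫)
    (hlead : Mhat uhat1 = ⟪Mhat uhat1, uhat1⟫ • uhat1)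
    (htop : ∀ x, ‖x‖ = 1 → ⟪Mhat x, x⟫ ≤ ⟪Mhat uhat1, uhat1⟫)
    (g : ℝ) (hg : g = μs ⟨0, by omega⟩ - μs ⟨1, by omega⟩)
    (hclose : ‖Mhat - M‖ < g / 2)
    (C1 L1 : EuclideanSpace ℝ (Fin m) →L[ℝ] EuclideanSpace ℝ (Fin m))
    (hC1 : C1 = ∑ i ∈ Finset.univ.erase ⟨0, by omega⟩,
      (μs ⟨0, by omega⟩ - μs i)⁻¹ • P i)
    (hL1 : L1 = C1.comp ((Mhat - M).comp (P ⟨0, by omega⟩))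
      + (P ⟨0, by omega⟩).comp ((Mhat - M).comp C1)) :
    ‖rankOneOp uhat1 uhat1 - P ⟨0, by omega⟩ - L1‖ ≤ 14 * (‖Mhat - M‖ / g) ^ 2 := by
  have hgap : ∀ i ≠ (⟨0, by omega⟩ : Fin N), μs i + g ≤ μs ⟨0, by omega⟩ := fun i hi => by
    have : μs i ≤ μs ⟨1, by omega⟩ :=
      hdec.antitone (Fin.le_def.2 (Nat.one_le_iff_ne_zero.2 fun h => hi (Fin.ext h)))
    linarith
  exact IsResolutionOfIdentity.norm_rankOneOp_sub_sub_le ⟨hPsymm, hPidem, hPorth, hPsum⟩ hgap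
    hu1 huhat1 hP0 hM hC1 hL1 hMhatsymm hlead htop hclose
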